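/- arXiv:1809.04490 — 4 statements merged into one kernel-verified Lean document; each statement's English description precedes it below -/
import Mathlib

section
/- Let ρ̃ : ℝ×ℝ³ → ℝ, u : ℝ×ℝ³ → ℝ³ and F : ℝ×ℝ³ → Matrix (Fin 3) (Fin 3) ℝ be continuously differentiable, and suppose that at every point the continuity equation ∂ₜρ̃ + ∇·(ρ̃u) = 0 and the deformation-tensor equation ∂ₜF + (u·∇)F = (∇u)F hold. Then the quantity ρ̃ det F satisfies the transport equation ∂ₜ(ρ̃ det F) + u·∇(ρ̃ det F) = 0 at every point. -/
open scoped BigOperators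

/-- Time partial derivative of a scalar field on ℝ × ℝ³. -/
noncomputable def dt (f : ℝ × (Fin 3 → ℝ) → ℝ) (p : ℝ × (Fin 3 → ℝ)) : ℝ :=
  fderiv ℝ f p (1, 0)

/-- Spatial partial derivative in direction `i` of a scalar field on ℝ × ℝ³. -/
noncomputable def dx (i : Fin 3) (f : ℝ × (Fin 3 → ℝ) → ℝ) (p : ℝ × (Fin 3 → ℝ)) : ℝ :=
  fderiv ℝ f p (0, Pi.single i 1)

/-! Write `D = ∂ₜ + u·∇`. By the product rule `D(ρ̃ det F) = (Dρ̃) det F + ρ̃ D(det F)`.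
The continuity equation says `Dρ̃ = -ρ̃ ∇·u`. Since `det` is multilinear in the rows, its
derivative is Jacobi's `d(det F) = tr (dF · adj F)`; with `DF = (∇u) F` and `F · adj F = det F • 1`
this gives `D(det F) = det F · tr ∇u = det F ∇·u`, and the two terms cancel. -/

namespace Matrix

variable {n : Type*} [Fintype n] [DecidableEq n]

theorem det_updateRow_eq_sum_adjugate {R : Type*} [CommRing R] (M : Matrix n n R) (i : n)
    (r : n → R) : (M.updateRow i r).det = ∑ k, M.adjugate k i * r k := by
  rw [← cramer_transpose_apply, cramer_eq_adjugate_mulVec, ← adjugate_transpose, mulVec,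
    dotProduct]
  rfl

theorem trace_mul_mul_adjugate {R : Type*} [CommRing R] (A M : Matrix n n R) :
    (A * M * M.adjugate).trace = M.det * A.trace := by
  rw [Matrix.mul_assoc, mul_adjugate, Matrix.mul_smul, Matrix.mul_one, trace_smul, smul_eq_mul]

variable (𝕜 : Type*) [NontriviallyNormedField 𝕜]

noncomputable def detContinuousMultilinearMap :
    ContinuousMultilinearMap 𝕜 (fun _ : n => n → 𝕜) 𝕜 where
  toMultilinearMap := (detRowAlternating : (n → 𝕜) [⋀^n]→ₗ[𝕜] 𝕜).toMultilinearMap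
  cont := continuous_id.matrix_det

end Matrix

section

variable {𝕜 : Type*} [NontriviallyNormedField 𝕜] {E : Type*} [NormedAddCommGroup E]
  [NormedSpace 𝕜 E]

theorem hasFDerivAt_matrix_det {n : Type*} [Fintype n] [DecidableEq n] {F : E → Matrix n n 𝕜}
    {F' : n → n → E →L[𝕜] 𝕜} {p : E}
    (hF : ∀ i j, HasFDerivAt (fun q => F q i j) (F' i j) p) :
    HasFDerivAt (fun q => (F q).det) (∑ i, ∑ k, (F p).adjugate k i • F' i k) p := by
  have hrows : HasFDerivAt (fun q i j => F q i j)
      (ContinuousLinearMap.pi fun i => ContinuousLinearMap.pi (F' i)) p :=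
    hasFDerivAt_pi.2 fun i => hasFDerivAt_pi.2 (hF i)
  refine (((Matrix.detContinuousMultilinearMap 𝕜).hasFDerivAt fun i j => F p i j).comp p
    hrows).congr_fderiv ?_
  ext v
  rw [ContinuousLinearMap.comp_apply, ContinuousMultilinearMap.linearDeriv_apply]
  simp only [_root_.sum_apply, _root_.smul_apply, smul_eq_mul]
  refine Finset.sum_congr rfl fun i _ => ?_
  exact (F p).det_updateRow_eq_sum_adjugate i _

theorem fderiv_mul_apply {f g : E → 𝕜} {p : E} (hf : DifferentiableAt 𝕜 f p)
    (hg : DifferentiableAt 𝕜 g p) (v : E) :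
    fderiv 𝕜 (fun q => f q * g q) p v = fderiv 𝕜 f p v * g p + f p * fderiv 𝕜 g p v := by
  rw [fderiv_fun_mul hf hg, _root_.add_apply, _root_.smul_apply, _root_.smul_apply, smul_eq_mul,
    smul_eq_mul]
  ring

end

section MaterialDerivative

variable (u : ℝ × (Fin 3 → ℝ) → Fin 3 → ℝ)

noncomputable def materialDeriv (f : ℝ × (Fin 3 → ℝ) → ℝ) (p : ℝ × (Fin 3 → ℝ)) : ℝ :=
  dt f p + ∑ l, u p l * dx l f p

noncomputable def velocityGrad (p : ℝ × (Fin 3 → ℝ)) : Matrix (Fin 3) (Fin 3) ℝ :=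
  Matrix.of fun i k => dx k (fun q => u q i) p

theorem materialDeriv_eq_fderiv (f : ℝ × (Fin 3 → ℝ) → ℝ) (p : ℝ × (Fin 3 → ℝ)) :
    materialDeriv u f p = fderiv ℝ f p (1, u p) := by
  have hdir : ((1 : ℝ), u p) = (1, 0) + ∑ l, u p l • ((0 : ℝ), Pi.single l (1 : ℝ)) := by
    ext l
    · simp [Prod.fst_sum]
    · simp [Prod.snd_sum, Finset.sum_apply, Pi.single_apply]
  rw [hdir, map_add, map_sum]
  simp only [map_smul, smul_eq_mul, materialDeriv, dt, dx]

variable {u}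

theorem materialDeriv_mul {f g : ℝ × (Fin 3 → ℝ) → ℝ} {p : ℝ × (Fin 3 → ℝ)}
    (hf : DifferentiableAt ℝ f p) (hg : DifferentiableAt ℝ g p) :
    materialDeriv u (fun q => f q * g q) p =
      materialDeriv u f p * g p + f p * materialDeriv u g p := by
  simp only [materialDeriv_eq_fderiv, fderiv_mul_apply hf hg]

theorem materialDeriv_det {F : ℝ × (Fin 3 → ℝ) → Matrix (Fin 3) (Fin 3) ℝ}
    {p : ℝ × (Fin 3 → ℝ)} (hF : ∀ i j, DifferentiableAt ℝ (fun q => F q i j) p) :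
    materialDeriv u (fun q => (F q).det) p =
      (Matrix.of (fun i j => materialDeriv u (fun q => F q i j) p) * (F p).adjugate).trace := by
  simp only [materialDeriv_eq_fderiv,
    (hasFDerivAt_matrix_det fun i j => (hF i j).hasFDerivAt).fderiv,
    _root_.sum_apply, _root_.smul_apply, smul_eq_mul, Matrix.trace, Matrix.diag,
    Matrix.mul_apply, Matrix.of_apply]
  simp only [mul_comm]

theorem materialDeriv_eq_neg_mul_trace_velocityGrad {ρ : ℝ × (Fin 3 → ℝ) → ℝ}
    {p : ℝ × (Fin 3 → ℝ)} (hρ : DifferentiableAt ℝ ρ p)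
    (hu : ∀ i, DifferentiableAt ℝ (fun q => u q i) p)
    (hcont : dt ρ p + ∑ i, dx i (fun q => ρ q * u q i) p = 0) :
    materialDeriv u ρ p = -(ρ p * (velocityGrad u p).trace) := by
  have hprod : ∀ i, dx i (fun q => ρ q * u q i) p =
      u p i * dx i ρ p + ρ p * dx i (fun q => u q i) p := fun i => by
    rw [dx, fderiv_mul_apply hρ (hu i), mul_comm (u p i)]
    rfl
  simp only [hprod, Finset.sum_add_distrib, ← Finset.mul_sum] at hcont
  simp only [materialDeriv, velocityGrad, Matrix.trace, Matrix.diag, Matrix.of_apply]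
  linear_combination hcont

end MaterialDerivative

/-- If the continuity equation `∂ₜρ̃ + ∇·(ρ̃u) = 0` and the deformation equation
`∂ₜF + (u·∇)F = (∇u)F` hold pointwise, then `ρ̃ det F` is transported:
`∂ₜ(ρ̃ det F) + u·∇(ρ̃ det F) = 0`. -/
theorem rho_detF_transport
    (ρt : ℝ × (Fin 3 → ℝ) → ℝ)
    (u : ℝ × (Fin 3 → ℝ) → Fin 3 → ℝ)
    (F : ℝ × (Fin 3 → ℝ) → Matrix (Fin 3) (Fin 3) ℝ)
    (hρ : ContDiff ℝ 1 ρt)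
    (hu : ∀ i, ContDiff ℝ 1 fun p => u p i)
    (hF : ∀ i j, ContDiff ℝ 1 fun p => F p i j)
    (hcont : ∀ p, dt ρt p + ∑ i, dx i (fun q => ρt q * u q i) p = 0)
    (hFeq : ∀ p i j,
      dt (fun q => F q i j) p + ∑ l, u p l * dx l (fun q => F q i j) p
        = ∑ k, dx k (fun q => u q i) p * F p k j) :
    ∀ p, dt (fun q => ρt q * (F q).det) p
        + ∑ l, u p l * dx l (fun q => ρt q * (F q).det) p = 0 := by
  intro p
  have hρp := hρ.differentiable one_ne_zero p
  have hup i := (hu i).differentiable one_ne_zero p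
  have hFp i j := (hF i j).differentiable one_ne_zero p
  have hDF :
      Matrix.of (fun i j => materialDeriv u (fun q => F q i j) p) = velocityGrad u p * F p :=
    Matrix.ext fun i j => hFeq p i j
  have hdet : DifferentiableAt ℝ (fun q => (F q).det) p :=
    (hasFDerivAt_matrix_det fun i j => (hFp i j).hasFDerivAt).differentiableAt
  change materialDeriv u (fun q => ρt q * (F q).det) p = 0
  rw [materialDeriv_mul hρp hdet, materialDeriv_eq_neg_mul_trace_velocityGrad hρp hup (hcont p),
    materialDeriv_det hFp, hDF, Matrix.trace_mul_mul_adjugate]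
  ring
end

section
/- Let u : ℝ×ℝ³ → ℝ³ and F : ℝ×ℝ³ → Matrix (Fin 3) (Fin 3) ℝ be continuously differentiable with det F(t,x) ≠ 0 at every point, and suppose ∂ₜF + (u·∇)F = (∇u)F holds at every point. Then the matrix field M = FFᵀ/(det F) satisfies at every point the evolution identity ∂ₜM + (u·∇)M = (∇u)M + M(∇u)ᵀ − (∇·u)M. -/
/-!
At a point `p`, the material derivative `∂ₜ + u·∇` is the directional derivative `D` along
`v = (1, u(p))`, and the hypothesis says `D F = (∇u) F`. Jacobi's formula
`D (det F) = tr (adj F · D F)` turns this into Liouville's identity `D (det F) = (∇·u) det F`,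
and the product rule applied to `M = (det F)⁻¹ • F Fᵀ` gives
`D M = -(∇·u) M + (∇u) M + M (∇u)ᵀ`.
-/

open scoped BigOperators
open Matrix

/-- The matrix field `M = FFᵀ/(det F)`. -/
noncomputable def Mfield (F : ℝ × (Fin 3 → ℝ) → Matrix (Fin 3) (Fin 3) ℝ)
    (p : ℝ × (Fin 3 → ℝ)) : Matrix (Fin 3) (Fin 3) ℝ :=
  ((F p).det)⁻¹ • (F p * (F p)ᵀ)

theorem trace_adjugate_mul_mul_self {n R : Type*} [Fintype n] [DecidableEq n] [CommRing R]
    (A F : Matrix n n R) : trace (adjugate F * (A * F)) = trace A * F.det := by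
  rw [← Matrix.mul_assoc, trace_mul_comm, ← Matrix.mul_assoc, mul_adjugate, smul_mul,
    Matrix.one_mul, trace_smul, smul_eq_mul, mul_comm]

theorem prod_updateCol_eq_prod_erase_mul {n R : Type*} [Fintype n] [DecidableEq n] [CommMonoid R]
    (A : Matrix n n R) (c : n → R) (i : n) (σ : Equiv.Perm n) :
    ∏ j, A.updateCol i c (σ j) j = (∏ j ∈ Finset.univ.erase i, A (σ j) j) * c (σ i) := by
  rw [← Finset.prod_erase_mul _ _ (Finset.mem_univ i)]
  congr 1
  · exact Finset.prod_congr rfl fun j hj => updateCol_ne (Finset.ne_of_mem_erase hj)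
  · exact updateCol_self

section EntrywiseFDeriv

variable {E : Type*} [NormedAddCommGroup E] [NormedSpace ℝ E] {m n o : Type*} {p v : E}

noncomputable def entrywiseFDeriv (G : E → Matrix m n ℝ) (p v : E) : Matrix m n ℝ :=
  of fun i j => fderiv ℝ (fun q => G q i j) p v

theorem entrywiseFDeriv_mul [Fintype n] {G : E → Matrix m n ℝ} {H : E → Matrix n o ℝ}
    (hG : ∀ i j, DifferentiableAt ℝ (fun q => G q i j) p)
    (hH : ∀ i j, DifferentiableAt ℝ (fun q => H q i j) p) :
    entrywiseFDeriv (fun q => G q * H q) p v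
      = entrywiseFDeriv G p v * H p + G p * entrywiseFDeriv H p v := by
  ext i k
  simp only [entrywiseFDeriv, of_apply, Matrix.add_apply, mul_apply, ← Finset.sum_add_distrib]
  rw [fderiv_fun_sum fun j _ => (hG i j).fun_mul (hH j k), _root_.sum_apply]
  refine Finset.sum_congr rfl fun j _ => ?_
  simp only [fderiv_fun_mul (hG i j) (hH j k), _root_.add_apply,
    _root_.smul_apply, smul_eq_mul]
  ring

theorem entrywiseFDeriv_transpose (G : E → Matrix m n ℝ) :
    entrywiseFDeriv (fun q => (G q)ᵀ) p v = (entrywiseFDeriv G p v)ᵀ :=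
  rfl

theorem entrywiseFDeriv_smul {c : E → ℝ} {G : E → Matrix m n ℝ}
    (hc : DifferentiableAt ℝ c p) (hG : ∀ i j, DifferentiableAt ℝ (fun q => G q i j) p) :
    entrywiseFDeriv (fun q => c q • G q) p v
      = fderiv ℝ c p v • G p + c p • entrywiseFDeriv G p v := by
  ext i j
  simp [entrywiseFDeriv, fderiv_fun_mul hc (hG i j), add_comm, mul_comm]

variable [Fintype n] [DecidableEq n]

theorem hasFDerivAt_det {G : E → Matrix n n ℝ}
    (hG : ∀ i j, DifferentiableAt ℝ (fun q => G q i j) p) :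
    HasFDerivAt (fun q => (G q).det)
      (∑ σ : Equiv.Perm n, Equiv.Perm.sign σ • ∑ i,
        (∏ j ∈ Finset.univ.erase i, G p (σ j) j) • fderiv ℝ (fun q => G q (σ i) i) p) p := by
  simp only [det_apply]
  exact HasFDerivAt.fun_sum fun σ _ =>
    (HasFDerivAt.finsetProd fun i _ => (hG (σ i) i).hasFDerivAt).const_smul _

theorem fderiv_det_apply {G : E → Matrix n n ℝ}
    (hG : ∀ i j, DifferentiableAt ℝ (fun q => G q i j) p) :
    fderiv ℝ (fun q => (G q).det) p v = trace (adjugate (G p) * entrywiseFDeriv G p v) :=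
  calc fderiv ℝ (fun q => (G q).det) p v
      = ∑ i, ∑ σ : Equiv.Perm n, Equiv.Perm.sign σ •
          ((∏ j ∈ Finset.univ.erase i, G p (σ j) j) * entrywiseFDeriv G p v (σ i) i) := by
        rw [(hasFDerivAt_det hG).fderiv, Finset.sum_comm]
        simp [Finset.smul_sum, entrywiseFDeriv]
    _ = ∑ i, ((G p).updateCol i fun k => entrywiseFDeriv G p v k i).det := by
        simp only [det_apply, prod_updateCol_eq_prod_erase_mul]
    _ = trace (adjugate (G p) * entrywiseFDeriv G p v) := by
        simp only [← cramer_apply, cramer_eq_adjugate_mulVec, trace, diag, mul_apply, mulVec,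
          dotProduct]

theorem entrywiseFDeriv_inv_det_smul_mul_transpose {G : E → Matrix n n ℝ} {A : Matrix n n ℝ}
    (hG : ∀ i j, DifferentiableAt ℝ (fun q => G q i j) p)
    (hdet : (G p).det ≠ 0) (hGA : entrywiseFDeriv G p v = A * G p) :
    entrywiseFDeriv (fun q => (G q).det⁻¹ • (G q * (G q)ᵀ)) p v
      = A * ((G p).det⁻¹ • (G p * (G p)ᵀ)) + (G p).det⁻¹ • (G p * (G p)ᵀ) * Aᵀ
        - trace A • (G p).det⁻¹ • (G p * (G p)ᵀ) := by
  have hdet_diff := (hasFDerivAt_det hG).differentiableAt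
  have hGt : ∀ i j, DifferentiableAt ℝ (fun q => (G q)ᵀ i j) p := fun i j => hG j i
  have hGGt : ∀ i j, DifferentiableAt ℝ (fun q => (G q * (G q)ᵀ) i j) p := fun i j => by
    simp only [mul_apply]
    exact DifferentiableAt.fun_sum fun k _ => (hG i k).fun_mul (hGt k j)
  have hderiv_det : fderiv ℝ (fun q => (G q).det) p v = trace A * (G p).det := by
    rw [fderiv_det_apply hG, hGA, trace_adjugate_mul_mul_self]
  have hderiv_inv_det : fderiv ℝ (fun q => (G q).det⁻¹) p v = -(trace A * (G p).det⁻¹) := by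
    have h : HasFDerivAt (fun q => (G q).det⁻¹)
        (-((G p).det ^ 2)⁻¹ • fderiv ℝ (fun q => (G q).det) p) p :=
      (hasDerivAt_inv hdet).comp_hasFDerivAt p hdet_diff.hasFDerivAt
    rw [h.fderiv, _root_.smul_apply, hderiv_det, smul_eq_mul]
    field_simp
  rw [entrywiseFDeriv_smul (c := fun q => (G q).det⁻¹) (hdet_diff.inv hdet) hGGt,
    entrywiseFDeriv_mul hG hGt, entrywiseFDeriv_transpose, hGA, hderiv_inv_det, transpose_mul]
  simp only [Matrix.mul_smul, Matrix.smul_mul, Matrix.mul_assoc]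
  module

end EntrywiseFDeriv

theorem dt_add_sum_mul_dx (f : ℝ × (Fin 3 → ℝ) → ℝ) (p : ℝ × (Fin 3 → ℝ)) (w : Fin 3 → ℝ) :
    dt f p + ∑ l, w l * dx l f p = fderiv ℝ f p (1, w) := by
  have : ((1 : ℝ), w) = (1, 0) + ∑ l, w l • ((0 : ℝ), (Pi.single l 1 : Fin 3 → ℝ)) := by
    ext <;> simp [Prod.fst_sum, Prod.snd_sum, Pi.single_apply]
  rw [this, map_add, map_sum]
  simp only [map_smul, smul_eq_mul, dt, dx]

theorem M_evolution_general
    (u : ℝ × (Fin 3 → ℝ) → Fin 3 → ℝ)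
    (F : ℝ × (Fin 3 → ℝ) → Matrix (Fin 3) (Fin 3) ℝ)
    (hF : ∀ i j, ContDiff ℝ 1 fun p => F p i j)
    (hdet : ∀ p, (F p).det ≠ 0)
    (hFeq : ∀ p i j,
      dt (fun q => F q i j) p + ∑ l, u p l * dx l (fun q => F q i j) p
        = ∑ k, dx k (fun q => u q i) p * F p k j) :
    ∀ p i j,
      dt (fun q => Mfield F q i j) p + ∑ l, u p l * dx l (fun q => Mfield F q i j) p
        = (∑ k, dx k (fun q => u q i) p * Mfield F p k j)
          + (∑ k, Mfield F p i k * dx k (fun q => u q j) p)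
          - (∑ l, dx l (fun q => u q l) p) * Mfield F p i j := by
  intro p i j
  let gradU : Matrix (Fin 3) (Fin 3) ℝ := of fun i k => dx k (fun q => u q i) p
  have hFdiff : ∀ i j, DifferentiableAt ℝ (fun q => F q i j) p := fun i j =>
    ((hF i j).differentiable one_ne_zero).differentiableAt
  have hFmat : entrywiseFDeriv F p (1, u p) = gradU * F p := by
    ext i j
    rw [entrywiseFDeriv, of_apply, ← dt_add_sum_mul_dx, hFeq, mul_apply]
    rfl
  have hMmat : entrywiseFDeriv (Mfield F) p (1, u p)
      = gradU * Mfield F p + Mfield F p * gradUᵀ - trace gradU • Mfield F p :=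
    entrywiseFDeriv_inv_det_smul_mul_transpose hFdiff (hdet p) hFmat
  have hMij := congrFun₂ hMmat i j
  simp only [entrywiseFDeriv, of_apply, Matrix.sub_apply, Matrix.add_apply, mul_apply,
    Matrix.smul_apply, transpose_apply, trace, diag_apply, smul_eq_mul, gradU] at hMij
  rw [dt_add_sum_mul_dx, hMij]

/-- If `∂ₜF + (u·∇)F = (∇u)F` holds pointwise and `det F ≠ 0`, then the field
`M = FFᵀ/(det F)` satisfies `∂ₜM + (u·∇)M = (∇u)M + M(∇u)ᵀ − (∇·u)M` entrywise. -/
theorem M_evolution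
    (u : ℝ × (Fin 3 → ℝ) → Fin 3 → ℝ)
    (F : ℝ × (Fin 3 → ℝ) → Matrix (Fin 3) (Fin 3) ℝ)
    (hu : ∀ i, ContDiff ℝ 1 fun p => u p i)
    (hF : ∀ i j, ContDiff ℝ 1 fun p => F p i j)
    (hdet : ∀ p, (F p).det ≠ 0)
    (hFeq : ∀ p i j,
      dt (fun q => F q i j) p + ∑ l, u p l * dx l (fun q => F q i j) p
        = ∑ k, dx k (fun q => u q i) p * F p k j) :
    ∀ p i j,
      dt (fun q => Mfield F q i j) p + ∑ l, u p l * dx l (fun q => Mfield F q i j) p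
        = (∑ k, dx k (fun q => u q i) p * Mfield F p k j)
          + (∑ k, Mfield F p i k * dx k (fun q => u q j) p)
          - (∑ l, dx l (fun q => u q l) p) * Mfield F p i j :=
  M_evolution_general u F hF hdet hFeq
end

section
/- (Composition second-derivative estimate, Proposition 2.2, case k = 2.) Let f : ℝ → ℝ be twice continuously differentiable with M₁ = sup_{|y| ≤ 1} |f′(y)| and M₂ = sup_{|y| ≤ 1} |f″(y)|, and let v : ℝ³ → ℝ be twice continuously differentiable with |v(x)| ≤ 1 for every x. Then ‖∇²(f ∘ v)‖_{L²} ≤ M₂ · ‖∇v‖²_{L⁴} + M₁ · ‖∇²v‖_{L²}, where all norms are over ℝ³ with Lebesgue measure. -/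
/-!
By the chain rule `D(f ∘ v) = f'(v) Dv`, and differentiating once more,
`D²(f ∘ v) = f''(v) Dv ⊗ Dv + f'(v) D²v`. Since `v` takes values in `[-1, 1]`, this gives the
pointwise bound `‖D²(f ∘ v)‖ ≤ M₂ ‖Dv‖² + M₁ ‖D²v‖`; Minkowski's inequality in `L²` and
`‖ ‖Dv‖² ‖_{L²} = ‖Dv‖²_{L⁴}` finish the proof.
-/

open MeasureTheory
open scoped ENNReal

section ChainRule

variable {𝕜 : Type*} [NontriviallyNormedField 𝕜]
  {E : Type*} [NormedAddCommGroup E] [NormedSpace 𝕜 E]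

theorem norm_iteratedFDeriv_two {F : Type*} [NormedAddCommGroup F] [NormedSpace 𝕜 F]
    (w : E → F) (x : E) :
    ‖iteratedFDeriv 𝕜 2 w x‖ = ‖fderiv 𝕜 (fderiv 𝕜 w) x‖ := by
  rw [← norm_iteratedFDeriv_fderiv, norm_iteratedFDeriv_one]

theorem fderiv_comp_eq_deriv_smul {g : 𝕜 → 𝕜} {v : E → 𝕜} {x : E}
    (hg : DifferentiableAt 𝕜 g (v x)) (hv : DifferentiableAt 𝕜 v x) :
    fderiv 𝕜 (fun y => g (v y)) x = deriv g (v x) • fderiv 𝕜 v x :=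
  (hg.hasDerivAt.comp_hasFDerivAt x hv.hasFDerivAt).fderiv

theorem fderiv_fderiv_comp_eq {g : 𝕜 → 𝕜} {v : E → 𝕜} {x : E}
    (hg : Differentiable 𝕜 g) (hg' : DifferentiableAt 𝕜 (deriv g) (v x))
    (hv : Differentiable 𝕜 v) (hv' : DifferentiableAt 𝕜 (fderiv 𝕜 v) x) :
    fderiv 𝕜 (fderiv 𝕜 (fun y => g (v y))) x =
      deriv g (v x) • fderiv 𝕜 (fderiv 𝕜 v) x
        + (deriv (deriv g) (v x) • fderiv 𝕜 v x).smulRight (fderiv 𝕜 v x) := by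
  have hD : fderiv 𝕜 (fun y => g (v y)) = fun y => deriv g (v y) • fderiv 𝕜 v y :=
    funext fun y => fderiv_comp_eq_deriv_smul (hg _) (hv y)
  have hg'v : DifferentiableAt 𝕜 (fun y => deriv g (v y)) x := hg'.comp x (hv x)
  rw [hD, fderiv_fun_smul hg'v hv', fderiv_comp_eq_deriv_smul hg' (hv x)]

theorem norm_fderiv_fderiv_comp_le {g : 𝕜 → 𝕜} {v : E → 𝕜} {x : E}
    (hg : Differentiable 𝕜 g) (hg' : DifferentiableAt 𝕜 (deriv g) (v x))
    (hv : Differentiable 𝕜 v) (hv' : DifferentiableAt 𝕜 (fderiv 𝕜 v) x) :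
    ‖fderiv 𝕜 (fderiv 𝕜 (fun y => g (v y))) x‖ ≤
      ‖deriv (deriv g) (v x)‖ * ‖fderiv 𝕜 v x‖ ^ 2
        + ‖deriv g (v x)‖ * ‖fderiv 𝕜 (fderiv 𝕜 v) x‖ := by
  rw [fderiv_fderiv_comp_eq hg hg' hv hv']
  refine (norm_add_le (E := E →L[𝕜] E →L[𝕜] 𝕜) _ _).trans ?_
  rw [add_comm, ContinuousLinearMap.norm_smulRight_apply, sq, ← mul_assoc]
  gcongr <;> exact ContinuousLinearMap.opNorm_smul_le _ _

end ChainRule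

section LpNorm

variable {α : Type*} [MeasurableSpace α] {μ : Measure α}

theorem eLpNorm_norm_sq {F : Type*} [NormedAddCommGroup F] (u : α → F) (p : ℝ≥0∞) :
    eLpNorm (fun x => ‖u x‖ ^ 2) p μ = eLpNorm u (p * 2) μ ^ 2 := by
  simpa only [Real.rpow_two, ENNReal.ofReal_ofNat, ENNReal.rpow_two] using
    eLpNorm_norm_rpow (μ := μ) (p := p) u two_pos

theorem eLpNorm_le_ofReal_mul_add_ofReal_mul {F : Type*} [NormedAddCommGroup F]
    {h : α → F} {u w : α → ℝ} {a b : ℝ} {p : ℝ≥0∞} (hp : 1 ≤ p) (ha : 0 ≤ a) (hb : 0 ≤ b)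
    (hu : AEStronglyMeasurable u μ) (hw : AEStronglyMeasurable w μ)
    (hbound : ∀ x, ‖h x‖ ≤ a * u x + b * w x) :
    eLpNorm h p μ ≤ ENNReal.ofReal a * eLpNorm u p μ + ENNReal.ofReal b * eLpNorm w p μ :=
  calc eLpNorm h p μ ≤ eLpNorm (a • u + b • w) p μ := eLpNorm_mono_real hbound
    _ ≤ eLpNorm (a • u) p μ + eLpNorm (b • w) p μ :=
      eLpNorm_add_le (hu.const_smul a) (hw.const_smul b) hp
    _ = _ := by
      rw [eLpNorm_const_smul, eLpNorm_const_smul, Real.enorm_of_nonneg ha,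
        Real.enorm_of_nonneg hb]

end LpNorm

/-- Composition second-derivative estimate: if `M₁ = sup_{|y|≤1} |f′(y)|`,
`M₂ = sup_{|y|≤1} |f″(y)|` and `|v| ≤ 1`, then
`‖∇²(f ∘ v)‖_{L²} ≤ M₂ ‖∇v‖²_{L⁴} + M₁ ‖∇²v‖_{L²}`. -/
theorem composition_second_derivative_estimate
    (f : ℝ → ℝ) (hf : ContDiff ℝ 2 f)
    (M₁ : ℝ) (hM₁ : M₁ = sSup ((fun y => |deriv f y|) '' Set.Icc (-1 : ℝ) 1))
    (M₂ : ℝ) (hM₂ : M₂ = sSup ((fun y => |deriv (deriv f) y|) '' Set.Icc (-1 : ℝ) 1))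
    (v : (Fin 3 → ℝ) → ℝ) (hv : ContDiff ℝ 2 v)
    (hvb : ∀ x, |v x| ≤ 1) :
    eLpNorm (fun x => ‖iteratedFDeriv ℝ 2 (fun y => f (v y)) x‖) 2 volume
      ≤ ENNReal.ofReal M₂ * (eLpNorm (fun x => ‖fderiv ℝ v x‖) 4 volume) ^ 2
        + ENNReal.ofReal M₁ * eLpNorm (fun x => ‖iteratedFDeriv ℝ 2 v x‖) 2 volume := by
  have hf' : ContDiff ℝ 1 (deriv f) := (contDiff_succ_iff_deriv.mp hf).2.2
  have hv' : ContDiff ℝ 1 (fderiv ℝ v) := hv.fderiv_right le_rfl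
  have hM₁v (x) : |deriv f (v x)| ≤ M₁ :=
    hM₁ ▸ (hf.continuous_deriv one_le_two).abs.continuousOn.le_sSup_image_Icc (abs_le.mp (hvb x))
  have hM₂v (x) : |deriv (deriv f) (v x)| ≤ M₂ :=
    hM₂ ▸ (hf'.continuous_deriv le_rfl).abs.continuousOn.le_sSup_image_Icc (abs_le.mp (hvb x))
  have hpointwise (x) : ‖‖iteratedFDeriv ℝ 2 (fun y => f (v y)) x‖‖
      ≤ M₂ * ‖fderiv ℝ v x‖ ^ 2 + M₁ * ‖iteratedFDeriv ℝ 2 v x‖ := by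
    rw [norm_norm, norm_iteratedFDeriv_two, norm_iteratedFDeriv_two]
    refine (norm_fderiv_fderiv_comp_le (hf.differentiable two_ne_zero)
      (hf'.differentiable one_ne_zero _) (hv.differentiable two_ne_zero)
      (hv'.differentiable one_ne_zero x)).trans ?_
    gcongr
    exacts [hM₂v x, hM₁v x]
  calc _ ≤ ENNReal.ofReal M₂ * eLpNorm (fun x => ‖fderiv ℝ v x‖ ^ 2) 2 volume
        + ENNReal.ofReal M₁ * eLpNorm (fun x => ‖iteratedFDeriv ℝ 2 v x‖) 2 volume :=
      eLpNorm_le_ofReal_mul_add_ofReal_mul one_le_two ((abs_nonneg _).trans (hM₂v 0))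
        ((abs_nonneg _).trans (hM₁v 0)) (hv'.continuous.norm.pow 2).aestronglyMeasurable
        (hv.continuous_iteratedFDeriv le_rfl).norm.aestronglyMeasurable hpointwise
    _ = _ := by
      rw [eLpNorm_norm_sq, eLpNorm_norm]
      norm_num
end

section
/- (Weighted-in-time interpolation, the core of Proposition 2.3.) Let θ ∈ (0,1) and let A, B : [0,∞) → [0,∞] be measurable. Then ∫₀^∞ A(t)^θ B(t)^{1−θ} dt ≤ (1−θ)^{−1/2} · (∫₀^∞ (1+t) A(t)² dt)^{θ/2} · (∫₀^∞ (1+t)² B(t)² dt)^{(1−θ)/2}. -/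
open MeasureTheory
open scoped ENNReal

/-!
Write `AᶿB^{1-θ} = ((1+t)A²)^{θ/2} · ((1+t)²B²)^{(1-θ)/2} · ((1+t)^{θ-2})^{1/2}`; the powers
of `1+t` cancel because `θ/2 + (1-θ) + (θ-2)/2 = 0`. Hölder's inequality for three factors with
exponents `θ/2, (1-θ)/2, 1/2` then bounds the integral, and the last factor is
`(∫₀^∞ (1+t)^{θ-2} dt)^{1/2} = (1-θ)^{-1/2}`.
-/

theorem lintegral_Ioi_ofReal_rpow {a : ℝ} (ha : a < -1) {c : ℝ} (hc : 0 < c) :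
    ∫⁻ x in Set.Ioi c, ENNReal.ofReal x ^ a = ENNReal.ofReal (-c ^ (a + 1) / (a + 1)) := by
  have hpos : ∀ᵐ x ∂volume.restrict (Set.Ioi c), 0 ≤ x ^ a :=
    (ae_restrict_iff' measurableSet_Ioi).2 <| .of_forall fun x hx =>
      Real.rpow_nonneg (hc.trans hx).le _
  rw [← integral_Ioi_rpow_of_lt ha hc,
    ofReal_integral_eq_lintegral_ofReal (integrableOn_Ioi_rpow_of_lt ha hc) hpos]
  exact setLIntegral_congr_fun measurableSet_Ioi fun x hx =>
    ENNReal.ofReal_rpow_of_pos (hc.trans hx)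

theorem lintegral_Ici_ofReal_one_add_rpow {a : ℝ} (ha : a < -1) :
    ∫⁻ t in Set.Ici (0 : ℝ), ENNReal.ofReal (1 + t) ^ a = ENNReal.ofReal (-(a + 1))⁻¹ := by
  have hpre : (1 + ·) ⁻¹' Set.Ioi (1 : ℝ) = Set.Ioi 0 := by ext; simp
  rw [← restrict_Ioi_eq_restrict_Ici, ← hpre,
    (measurePreserving_add_left volume (1 : ℝ)).setLIntegral_comp_preimage_emb
      (Homeomorph.addLeft (1 : ℝ)).measurableEmbedding (fun s => ENNReal.ofReal s ^ a),
    lintegral_Ioi_ofReal_rpow ha one_pos, Real.one_rpow, neg_div, one_div, inv_neg]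

namespace ENNReal

theorem lintegral_rpow_mul_rpow_mul_rpow_le {α : Type*} [MeasurableSpace α] {μ : Measure α}
    {f g h : α → ℝ≥0∞} (hf : AEMeasurable f μ) (hg : AEMeasurable g μ) (hh : AEMeasurable h μ)
    {p q r : ℝ} (hp : 0 ≤ p) (hq : 0 ≤ q) (hr : 0 ≤ r) (hpqr : p + q + r = 1) :
    ∫⁻ a, f a ^ p * g a ^ q * h a ^ r ∂μ
      ≤ (∫⁻ a, f a ∂μ) ^ p * (∫⁻ a, g a ∂μ) ^ q * (∫⁻ a, h a ∂μ) ^ r := by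
  have := lintegral_prod_norm_pow_le (μ := μ) Finset.univ (f := ![f, g, h]) (p := ![p, q, r])
    (by simp [Fin.forall_fin_succ, hf, hg, hh]) (by simpa [Fin.sum_univ_three] using hpqr)
    (by simp [Fin.forall_fin_succ, hp, hq, hr])
  simpa [Fin.prod_univ_three] using this

theorem rpow_mul_rpow_one_sub_eq {x : ℝ≥0∞} (hx0 : x ≠ 0) (hxt : x ≠ ⊤) {θ : ℝ} (h0 : 0 ≤ θ)
    (h1 : θ ≤ 1) (a b : ℝ≥0∞) :
    a ^ θ * b ^ (1 - θ)
      = (x * a ^ (2 : ℝ)) ^ (θ / 2) * (x ^ (2 : ℝ) * b ^ (2 : ℝ)) ^ ((1 - θ) / 2)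
        * (x ^ (θ - 2)) ^ (1 / 2 : ℝ) := by
  have hx : x ^ (θ / 2) * x ^ (1 - θ) * x ^ ((θ - 2) / 2) = 1 := by
    rw [← rpow_add _ _ hx0 hxt, ← rpow_add _ _ hx0 hxt, ← rpow_zero (x := x)]
    ring_nf
  rw [mul_rpow_of_nonneg _ _ (by linarith), mul_rpow_of_nonneg _ _ (by linarith),
    ← rpow_mul, ← rpow_mul, ← rpow_mul, ← rpow_mul]
  calc a ^ θ * b ^ (1 - θ)
      = x ^ (θ / 2) * x ^ (1 - θ) * x ^ ((θ - 2) / 2) * (a ^ θ * b ^ (1 - θ)) := by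
        rw [hx, one_mul]
    _ = _ := by ring_nf

end ENNReal

/-- Weighted-in-time interpolation: for `θ ∈ (0,1)` and measurable
`A, B : [0,∞) → [0,∞]`,
`∫₀^∞ AᶿB^{1−θ} ≤ (1−θ)^{−1/2} (∫₀^∞ (1+t)A²)^{θ/2} (∫₀^∞ (1+t)²B²)^{(1−θ)/2}`. -/
theorem weighted_time_interpolation
    (θ : ℝ) (hθ0 : 0 < θ) (hθ1 : θ < 1)
    (A B : ℝ → ℝ≥0∞) (hA : Measurable A) (hB : Measurable B) :
    ∫⁻ t in Set.Ici (0 : ℝ), A t ^ θ * B t ^ (1 - θ)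
      ≤ ENNReal.ofReal ((1 - θ) ^ (-(1 : ℝ) / 2))
        * (∫⁻ t in Set.Ici (0 : ℝ), ENNReal.ofReal (1 + t) * A t ^ (2 : ℝ)) ^ (θ / 2)
        * (∫⁻ t in Set.Ici (0 : ℝ), ENNReal.ofReal ((1 + t) ^ 2) * B t ^ (2 : ℝ))
            ^ ((1 - θ) / 2) := by
  have hweight : (∫⁻ t in Set.Ici (0 : ℝ), ENNReal.ofReal (1 + t) ^ (θ - 2)) ^ (1 / 2 : ℝ)
      = ENNReal.ofReal ((1 - θ) ^ (-(1 : ℝ) / 2)) := by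
    rw [lintegral_Ici_ofReal_one_add_rpow (by linarith), show -(θ - 2 + 1) = 1 - θ by ring,
      ENNReal.ofReal_rpow_of_nonneg (by simp; linarith) (by norm_num),
      Real.inv_rpow (by linarith), ← Real.rpow_neg (by linarith), neg_div]
  have hB_weight : ∫⁻ t in Set.Ici (0 : ℝ), ENNReal.ofReal ((1 + t) ^ 2) * B t ^ (2 : ℝ)
      = ∫⁻ t in Set.Ici (0 : ℝ), ENNReal.ofReal (1 + t) ^ (2 : ℝ) * B t ^ (2 : ℝ) :=
    setLIntegral_congr_fun measurableSet_Ici fun t ht => by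
      rw [ENNReal.ofReal_pow (by simp at ht; linarith), ← ENNReal.rpow_ofNat]
  calc ∫⁻ t in Set.Ici (0 : ℝ), A t ^ θ * B t ^ (1 - θ)
      = ∫⁻ t in Set.Ici (0 : ℝ), (ENNReal.ofReal (1 + t) * A t ^ (2 : ℝ)) ^ (θ / 2)
          * (ENNReal.ofReal (1 + t) ^ (2 : ℝ) * B t ^ (2 : ℝ)) ^ ((1 - θ) / 2)
          * (ENNReal.ofReal (1 + t) ^ (θ - 2)) ^ (1 / 2 : ℝ) :=
        setLIntegral_congr_fun measurableSet_Ici fun t ht =>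
          ENNReal.rpow_mul_rpow_one_sub_eq (by simp at ht ⊢; linarith) ENNReal.ofReal_ne_top
            hθ0.le hθ1.le _ _
    _ ≤ _ := ENNReal.lintegral_rpow_mul_rpow_mul_rpow_le (by fun_prop) (by fun_prop) (by fun_prop)
        (by linarith) (by linarith) (by norm_num) (by ring)
    _ = _ := by rw [hweight, hB_weight, mul_right_comm, mul_comm (_ ^ (θ / 2))]
end
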